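/- arXiv:1409.4752 — 3 statements merged into one kernel-verified Lean document; each statement's English description precedes it below -/
import Mathlib

section
/- Let X and Y be finite alphabets and let ε ∈ (0,1). For all joint probability distributions P and Q on X×Y with total variation distance ‖P−Q‖ = ∑_{x∈X}∑_{y∈Y} |P(x,y)−Q(x,y)| ≤ ε, it holds that |H(Y|X‖P) − H(Y|X‖Q)| ≤ 2ε·log|Y| + 2H₂(ε). -/
open Real Finset

/-- Binary entropy function (base 2). -/
noncomputable def H2 (ε : ℝ) : ℝ :=
  -(ε * Real.logb 2 ε) - (1 - ε) * Real.logb 2 (1 - ε)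

/-- `p` is a probability distribution on the finite alphabet `α`. -/
def IsProb {α : Type*} [Fintype α] (p : α → ℝ) : Prop :=
  (∀ a, 0 ≤ p a) ∧ ∑ a, p a = 1

/-- `W` is a channel (stochastic matrix) from `X` to `Y`. -/
def IsChannel {X Y : Type*} [Fintype Y] (W : X → Y → ℝ) : Prop :=
  ∀ x, (∀ y, 0 ≤ W x y) ∧ ∑ y, W x y = 1

/-- Conditional entropy `H(Y|X‖P)` (base 2) of a joint distribution `P` on `X × Y`. -/
noncomputable def condEnt {X Y : Type*} [Fintype X] [Fintype Y] (P : X × Y → ℝ) : ℝ :=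
  -∑ x : X, ∑ y : Y, P (x, y) * Real.logb 2 (P (x, y) / ∑ y' : Y, P (x, y'))

/-- Mutual information `I(U;Y‖P)` (base 2) of a joint distribution `P` on `U × Y`. -/
noncomputable def mutInf {U Y : Type*} [Fintype U] [Fintype Y] (P : U × Y → ℝ) : ℝ :=
  ∑ u : U, ∑ y : Y,
    P (u, y) * Real.logb 2 (P (u, y) / ((∑ y' : Y, P (u, y')) * ∑ u' : U, P (u', y)))

/-- Channel distance `d(W,W') = max_x ∑_y |W(y|x) − W'(y|x)|`. -/
noncomputable def dChan {X Y : Type*} [Fintype Y] (W W' : X → Y → ℝ) : ℝ :=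
  ⨆ x : X, ∑ y : Y, |W x y - W' x y|

/-!
Work in nats with the unnormalised conditional entropy
`H(P) = ∑ P(x,y) log (P_X(x) / P(x,y))`, built from the perspective `a log (s / a)` of the
logarithm. By the log-sum inequality `H` is superadditive, hence monotone on nonnegative functions;
it is also almost subadditive: `H(m + r) ≤ H(m) + H(r) + h(δ)` when `m + r` is a probability
distribution and `r` has mass `δ`, with `h` the binary entropy in nats.
Splitting `P = (P ⊓ Q) + r`, where `r` has mass `δ ≤ ε`, gives
`H(P) ≤ H(P ⊓ Q) + δ log |Y| + h(δ) ≤ H(Q) + δ log |Y| + h(δ)`, enough for `ε ≤ 1/2` since `h` is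
monotone on `[0, 1/2]`. For `ε > 1/2` the trivial bound `|H(P) - H(Q)| ≤ log |Y|` suffices.
-/

noncomputable def entTerm (a s : ℝ) : ℝ := a * log (s / a)

section EntTerm

@[simp] lemma entTerm_zero_left (s : ℝ) : entTerm 0 s = 0 := by simp [entTerm]

lemma entTerm_nonneg {a s : ℝ} (ha : 0 ≤ a) (has : a ≤ s) : 0 ≤ entTerm a s := by
  rcases ha.eq_or_lt with rfl | ha
  · simp
  · exact mul_nonneg ha.le (log_nonneg ((one_le_div ha).mpr has))

/-- The tangent-line bound `log x ≤ x - 1` at `x = c / (b t)`. -/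
lemma entTerm_le {b c t : ℝ} (hb : 0 ≤ b) (hbc : b ≤ c) (ht : 0 < t) :
    entTerm b c ≤ b * log t + c / t - b := by
  rcases hb.eq_or_lt with rfl | hb
  · simpa using div_nonneg hbc ht.le
  have hc : 0 < c := hb.trans_le hbc
  have hsplit : log (c / b) = log (c / (b * t)) + log t := by
    rw [← log_mul (by positivity) ht.ne']
    congr 1
    field_simp
  calc entTerm b c = b * log (c / (b * t)) + b * log t := by rw [entTerm, hsplit, mul_add]
    _ ≤ b * (c / (b * t) - 1) + b * log t := by
      gcongr
      exact log_le_sub_one_of_pos (by positivity)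
    _ = b * log t + c / t - b := by field_simp; ring

/-- The log-sum inequality. -/
lemma sum_entTerm_le {ι : Type*} (s : Finset ι) {b c : ι → ℝ} (hb : ∀ i ∈ s, 0 ≤ b i)
    (hbc : ∀ i ∈ s, b i ≤ c i) :
    ∑ i ∈ s, entTerm (b i) (c i) ≤ entTerm (∑ i ∈ s, b i) (∑ i ∈ s, c i) := by
  set B := ∑ i ∈ s, b i
  set C := ∑ i ∈ s, c i
  rcases (sum_nonneg hb).eq_or_lt with hB | hB
  · have hb0 : ∀ i ∈ s, b i = 0 := (sum_eq_zero_iff_of_nonneg hb).1 hB.symm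
    rw [show B = 0 from hB.symm, entTerm_zero_left]
    exact (sum_eq_zero fun i hi => by rw [hb0 i hi, entTerm_zero_left]).le
  have hC : 0 < C := hB.trans_le (sum_le_sum hbc)
  calc ∑ i ∈ s, entTerm (b i) (c i)
      ≤ ∑ i ∈ s, (b i * log (C / B) + c i / (C / B) - b i) :=
        sum_le_sum fun i hi => entTerm_le (hb i hi) (hbc i hi) (by positivity)
    _ = entTerm B C := by
        rw [sum_sub_distrib, sum_add_distrib, ← sum_mul, ← sum_div, entTerm]
        field_simp
        ring

lemma entTerm_add_entTerm_le {b₁ b₂ c₁ c₂ : ℝ} (hb₁ : 0 ≤ b₁) (hb₂ : 0 ≤ b₂) (h₁ : b₁ ≤ c₁)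
    (h₂ : b₂ ≤ c₂) : entTerm b₁ c₁ + entTerm b₂ c₂ ≤ entTerm (b₁ + b₂) (c₁ + c₂) := by
  simpa [Fin.sum_univ_two] using sum_entTerm_le univ (b := ![b₁, b₂]) (c := ![c₁, c₂])
    (by simp [Fin.forall_fin_two, hb₁, hb₂]) (by simp [Fin.forall_fin_two, h₁, h₂])

lemma mul_log_div_le_entTerm_add {a b c s : ℝ} (hb : 0 ≤ b) (hbc : b ≤ c) (hba : b ≤ a)
    (has : a ≤ s) : b * log (s / a) ≤ entTerm b c + b * log (s / c) := by
  rcases hb.eq_or_lt with rfl | hb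
  · simp
  have hc : 0 < c := hb.trans_le hbc
  have ha : 0 < a := hb.trans_le hba
  have hs : 0 < s := ha.trans_le has
  calc b * log (s / a) ≤ b * log (s / b) := by gcongr
    _ = b * (log (c / b) + log (s / c)) := by
        rw [← log_mul (by positivity) (by positivity)]
        congr 2
        field_simp
    _ = entTerm b c + b * log (s / c) := by rw [entTerm, mul_add]

lemma entTerm_add_le {b₁ b₂ c₁ c₂ : ℝ} (hb₁ : 0 ≤ b₁) (hb₂ : 0 ≤ b₂) (h₁ : b₁ ≤ c₁)
    (h₂ : b₂ ≤ c₂) :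
    entTerm (b₁ + b₂) (c₁ + c₂) ≤ entTerm b₁ c₁ + entTerm b₂ c₂
      + b₁ * log ((c₁ + c₂) / c₁) + b₂ * log ((c₁ + c₂) / c₂) := by
  have k₁ := mul_log_div_le_entTerm_add hb₁ h₁ (le_add_of_nonneg_right hb₂) (add_le_add h₁ h₂)
  have k₂ := mul_log_div_le_entTerm_add hb₂ h₂ (le_add_of_nonneg_left hb₁) (add_le_add h₁ h₂)
  rw [entTerm, add_mul]
  linarith

lemma entTerm_one_sub_add_entTerm (δ : ℝ) :
    entTerm (1 - δ) 1 + entTerm δ 1 = binEntropy δ := by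
  simp [entTerm, binEntropy, one_div, add_comm]

variable {ι : Type*} [Fintype ι]

lemma sum_entTerm_le_mul_log_card {b : ι → ℝ} (hb : 0 ≤ b) :
    ∑ i, entTerm (b i) (∑ j, b j) ≤ (∑ j, b j) * log (Fintype.card ι) := by
  rcases isEmpty_or_nonempty ι with hι | hι
  · simp
  have hn : (0 : ℝ) < Fintype.card ι := by exact_mod_cast Fintype.card_pos
  calc ∑ i, entTerm (b i) (∑ j, b j)
      ≤ ∑ i, (b i * log (Fintype.card ι) + (∑ j, b j) / Fintype.card ι - b i) :=
        sum_le_sum fun i _ => entTerm_le (hb i) (single_le_sum (fun j _ => hb j) (mem_univ i)) hn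
    _ = (∑ j, b j) * log (Fintype.card ι) := by
        rw [sum_sub_distrib, sum_add_distrib, ← sum_mul, sum_const, card_univ, nsmul_eq_mul]
        field_simp
        ring

lemma sum_entTerm_add_le {b c : ι → ℝ} (hb : 0 ≤ b) (hc : 0 ≤ c) :
    ∑ i, entTerm (b i + c i) (∑ j, (b j + c j))
      ≤ ∑ i, entTerm (b i) (∑ j, b j) + ∑ i, entTerm (c i) (∑ j, c j)
        + entTerm (∑ j, b j) (∑ j, b j + ∑ j, c j)
        + entTerm (∑ j, c j) (∑ j, b j + ∑ j, c j) := by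
  rw [sum_add_distrib]
  calc ∑ i, entTerm (b i + c i) (∑ j, b j + ∑ j, c j)
      ≤ ∑ i, (entTerm (b i) (∑ j, b j) + entTerm (c i) (∑ j, c j)
          + b i * log ((∑ j, b j + ∑ j, c j) / ∑ j, b j)
          + c i * log ((∑ j, b j + ∑ j, c j) / ∑ j, c j)) :=
        sum_le_sum fun i _ => entTerm_add_le (hb i) (hc i)
          (single_le_sum (fun j _ => hb j) (mem_univ i))
          (single_le_sum (fun j _ => hc j) (mem_univ i))
    _ = _ := by simp only [sum_add_distrib, ← sum_mul, entTerm]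

end EntTerm

section CondEntNat

variable {X Y : Type*} [Fintype X] [Fintype Y]

noncomputable def condEntNat (P : X × Y → ℝ) : ℝ :=
  ∑ x, ∑ y, entTerm (P (x, y)) (∑ y', P (x, y'))

lemma condEnt_eq_condEntNat_div (P : X × Y → ℝ) : condEnt P = condEntNat P / log 2 := by
  simp only [condEnt, condEntNat, sum_div, ← sum_neg_distrib]
  refine sum_congr rfl fun x _ => sum_congr rfl fun y _ => ?_
  rw [entTerm, ← inv_div (P (x, y)), log_inv, logb]
  ring

lemma H2_eq_binEntropy_div (ε : ℝ) : H2 ε = binEntropy ε / log 2 := by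
  rw [H2, binEntropy, logb, logb, log_inv, log_inv]
  ring

lemma condEntNat_nonneg {P : X × Y → ℝ} (hP : 0 ≤ P) : 0 ≤ condEntNat P :=
  sum_nonneg fun x _ => sum_nonneg fun y _ =>
    entTerm_nonneg (hP _) (single_le_sum (fun y' _ => hP (x, y')) (mem_univ y))

lemma condEntNat_le_mul_log_card {P : X × Y → ℝ} (hP : 0 ≤ P) :
    condEntNat P ≤ (∑ z, P z) * log (Fintype.card Y) := by
  rw [Fintype.sum_prod_type, sum_mul]
  exact sum_le_sum fun x _ => sum_entTerm_le_mul_log_card fun y => hP (x, y)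

lemma abs_condEntNat_sub_le_log_card {P Q : X × Y → ℝ} (hP : 0 ≤ P) (hQ : 0 ≤ Q)
    (hP1 : ∑ z, P z = 1) (hQ1 : ∑ z, Q z = 1) :
    |condEntNat P - condEntNat Q| ≤ log (Fintype.card Y) :=
  abs_sub_le_of_nonneg_of_le (condEntNat_nonneg hP)
    (by simpa [hP1] using condEntNat_le_mul_log_card hP) (condEntNat_nonneg hQ)
    (by simpa [hQ1] using condEntNat_le_mul_log_card hQ)

lemma condEntNat_add_condEntNat_le {u v : X × Y → ℝ} (hu : 0 ≤ u) (hv : 0 ≤ v) :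
    condEntNat u + condEntNat v ≤ condEntNat (u + v) := by
  rw [condEntNat, condEntNat, condEntNat, ← sum_add_distrib]
  refine sum_le_sum fun x _ => ?_
  rw [← sum_add_distrib]
  refine sum_le_sum fun y _ => ?_
  simp only [Pi.add_apply, sum_add_distrib]
  exact entTerm_add_entTerm_le (hu _) (hv _)
    (single_le_sum (fun y' _ => hu (x, y')) (mem_univ y))
    (single_le_sum (fun y' _ => hv (x, y')) (mem_univ y))

lemma condEntNat_mono {u v : X × Y → ℝ} (hu : 0 ≤ u) (huv : u ≤ v) :
    condEntNat u ≤ condEntNat v := by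
  have h := condEntNat_add_condEntNat_le hu (sub_nonneg.2 huv)
  rw [add_sub_cancel] at h
  linarith [condEntNat_nonneg (sub_nonneg.2 huv)]

lemma condEntNat_add_le {u v : X × Y → ℝ} (hu : 0 ≤ u) (hv : 0 ≤ v) :
    condEntNat (u + v) ≤ condEntNat u + condEntNat v
      + entTerm (∑ z, u z) (∑ z, u z + ∑ z, v z)
      + entTerm (∑ z, v z) (∑ z, u z + ∑ z, v z) := by
  have hrows : condEntNat (u + v) ≤ condEntNat u + condEntNat v
      + ∑ x, entTerm (∑ y, u (x, y)) (∑ y, u (x, y) + ∑ y, v (x, y))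
      + ∑ x, entTerm (∑ y, v (x, y)) (∑ y, u (x, y) + ∑ y, v (x, y)) := by
    rw [condEntNat, condEntNat, condEntNat, ← sum_add_distrib, ← sum_add_distrib,
      ← sum_add_distrib]
    exact sum_le_sum fun x _ => sum_entTerm_add_le (fun y => hu (x, y)) (fun y => hv (x, y))
  have hu_rows := sum_entTerm_le univ (b := fun x => ∑ y, u (x, y))
    (c := fun x => ∑ y, u (x, y) + ∑ y, v (x, y)) (fun x _ => sum_nonneg fun y _ => hu (x, y))
    (fun x _ => le_add_of_nonneg_right (sum_nonneg fun y _ => hv (x, y)))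
  have hv_rows := sum_entTerm_le univ (b := fun x => ∑ y, v (x, y))
    (c := fun x => ∑ y, u (x, y) + ∑ y, v (x, y)) (fun x _ => sum_nonneg fun y _ => hv (x, y))
    (fun x _ => le_add_of_nonneg_left (sum_nonneg fun y _ => hu (x, y)))
  simp only [sum_add_distrib, ← Fintype.sum_prod_type] at hu_rows hv_rows
  linarith

lemma condEntNat_add_le_of_sum_add_sum_eq_one {m r : X × Y → ℝ} (hm : 0 ≤ m) (hr : 0 ≤ r)
    (h1 : ∑ z, m z + ∑ z, r z = 1) :
    condEntNat (m + r) ≤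
      condEntNat m + (∑ z, r z) * log (Fintype.card Y) + binEntropy (∑ z, r z) := by
  have h := condEntNat_add_le hm hr
  rw [h1, show ∑ z, m z = 1 - ∑ z, r z by linarith] at h
  linarith [condEntNat_le_mul_log_card hr, entTerm_one_sub_add_entTerm (∑ z, r z)]

lemma condEntNat_le_add_of_sum_abs_sub_le {P Q : X × Y → ℝ} (hP : 0 ≤ P) (hQ : 0 ≤ Q)
    (hP1 : ∑ z, P z = 1) {ε : ℝ} (hd : ∑ z, |P z - Q z| ≤ ε) (hε : ε ≤ 1 / 2) :
    condEntNat P ≤ condEntNat Q + ε * log (Fintype.card Y) + binEntropy ε := by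
  set r := P - P ⊓ Q
  have hr : 0 ≤ r := sub_nonneg.2 inf_le_left
  have hδ : ∑ z, r z ≤ ε := by
    refine (sum_le_sum fun z _ => ?_).trans hd
    simp only [r, Pi.sub_apply, Pi.inf_apply]
    rcases le_total (P z) (Q z) with h | h
    · rw [inf_of_le_left h, sub_self]
      exact abs_nonneg _
    · rw [inf_of_le_right h]
      exact le_abs_self _
  have hsplit : ∑ z, (P ⊓ Q) z + ∑ z, r z = 1 := by
    rw [← sum_add_distrib, ← hP1]
    simp [r]
  calc condEntNat P = condEntNat (P ⊓ Q + r) := by rw [add_sub_cancel]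
    _ ≤ condEntNat (P ⊓ Q) + (∑ z, r z) * log (Fintype.card Y) + binEntropy (∑ z, r z) :=
        condEntNat_add_le_of_sum_add_sum_eq_one (le_inf hP hQ) hr hsplit
    _ ≤ condEntNat Q + ε * log (Fintype.card Y) + binEntropy ε := by
        have hδ₀ : 0 ≤ ∑ z, r z := sum_nonneg fun z _ => hr z
        gcongr ?_ + ?_ * _ + ?_
        · exact condEntNat_mono (le_inf hP hQ) inf_le_right
        · exact binEntropy_strictMonoOn.monotoneOn ⟨hδ₀, by linarith⟩
            ⟨hδ₀.trans hδ, by linarith⟩ hδ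

end CondEntNat

/-- continuity of conditional entropy in total variation distance. -/
theorem conditional_entropy_continuity {X Y : Type*} [Fintype X] [Fintype Y]
    {ε : ℝ} (hε : ε ∈ Set.Ioo (0 : ℝ) 1)
    (P Q : X × Y → ℝ) (hP : IsProb P) (hQ : IsProb Q)
    (hd : ∑ x : X, ∑ y : Y, |P (x, y) - Q (x, y)| ≤ ε) :
    |condEnt P - condEnt Q| ≤ 2 * ε * Real.logb 2 (Fintype.card Y) + 2 * H2 ε := by
  obtain ⟨hP0, hP1⟩ := hP
  obtain ⟨hQ0, hQ1⟩ := hQ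
  rw [← Fintype.sum_prod_type (f := fun z => |P z - Q z|)] at hd
  have hlog2 : 0 < log 2 := log_pos one_lt_two
  rw [condEnt_eq_condEntNat_div, condEnt_eq_condEntNat_div, H2_eq_binEntropy_div, logb, ← sub_div,
    abs_div, abs_of_pos hlog2, mul_div_assoc', mul_div_assoc', ← add_div]
  gcongr
  have hL := log_natCast_nonneg (Fintype.card Y)
  have hh := binEntropy_nonneg hε.1.le hε.2.le
  rcases le_or_gt ε (1 / 2) with hε' | hε'
  · have hPQ := condEntNat_le_add_of_sum_abs_sub_le hP0 hQ0 hP1 hd hε'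
    have hQP := condEntNat_le_add_of_sum_abs_sub_le hQ0 hP0 hQ1
      (by simpa only [abs_sub_comm] using hd) hε'
    rw [abs_sub_le_iff]
    constructor <;> nlinarith
  · have := abs_condEntNat_sub_le_log_card hP0 hQ0 hP1 hQ1
    nlinarith
end

section
/- Let 𝔚 be a compound wiretap channel over finite alphabets X, Y, Z and let {𝔚_n}_{n∈ℕ} be a sequence of compound wiretap channels over the same alphabets with lim_{n→∞} D(𝔚,𝔚_n) = 0. Then the multi-letter secrecy capacities converge: lim_{n→∞} C_S(𝔚_n) = C_S(𝔚). -/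
/-! Entropy is uniformly continuous on the simplex, so channels that are `δ`-close row by row give
outputs with `ω`-close entropies for every input. Exchanging the letters of a memoryless extension
one at a time, and conditioning on the remaining letters through the chain rule, shows that the
output entropies of `Wⁿ` and `W'ⁿ` differ by at most `n ω`, so `I(U;Yⁿ) = H(Yⁿ) - H(Yⁿ|U)` moves by
at most `2 n ω`. A `D`-distance below `δ` matches every state of one compound channel with a
`δ`-close state of the other, so the infimum and the supremum over states move by at most `2 n ω`
each. After the normalisation by `1/n` the multi-letter expressions are `4 ω`-close uniformly in the
block length, and the estimate passes to the limits. -/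

open Real Finset

/-- Joint distribution on `U × Yⁿ` induced by the uniform distribution on `U`, a stochastic
encoder `E` and the `n`-fold memoryless extension of the channel `W`. -/
noncomputable def jointOut {X Y U : Type*} [Fintype X] [Fintype U] (n : ℕ)
    (W : X → Y → ℝ) (E : U → (Fin n → X) → ℝ) : U × (Fin n → Y) → ℝ :=
  fun p => ∑ xn : Fin n → X,
    (∏ i : Fin n, W (xn i) (p.2 i)) * E p.1 xn * ((Fintype.card U : ℝ))⁻¹

/-- Distance `D(𝔚₁,𝔚₂)` between two compound wiretap channels. -/
noncomputable def Dcwc {X Y Z : Type*} [Fintype Y] [Fintype Z] {S₁ S₂ : Type*}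
    (W₁ : S₁ → X → Y → ℝ) (V₁ : S₁ → X → Z → ℝ)
    (W₂ : S₂ → X → Y → ℝ) (V₂ : S₂ → X → Z → ℝ) : ℝ :=
  max (max (⨆ s₂ : S₂, ⨅ s₁ : S₁, dChan (W₁ s₁) (W₂ s₂))
           (⨆ s₁ : S₁, ⨅ s₂ : S₂, dChan (W₁ s₁) (W₂ s₂)))
      (max (⨆ s₂ : S₂, ⨅ s₁ : S₁, dChan (V₁ s₁) (V₂ s₂))
           (⨆ s₁ : S₁, ⨅ s₂ : S₂, dChan (V₁ s₁) (V₂ s₂)))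

/-- The per-`n` compound secrecy expression
`F_n(𝔚) = (1/n)·sup_{U,E} ( inf_s I(U;Yⁿ_s) − sup_s I(U;Zⁿ_s) )`, where the supremum ranges
over all finite auxiliary sets `U` (represented by `Fin (k+1)`) and stochastic encoders `E`. -/
noncomputable def secF {X Y Z : Type*} [Fintype X] [Fintype Y] [Fintype Z] {S : Type*}
    (W : S → X → Y → ℝ) (V : S → X → Z → ℝ) (n : ℕ) : ℝ :=
  (1 / (n : ℝ)) * sSup {r : ℝ | ∃ (k : ℕ) (E : Fin (k + 1) → (Fin n → X) → ℝ),
    (∀ u, (∀ xn, 0 ≤ E u xn) ∧ ∑ xn : Fin n → X, E u xn = 1) ∧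
    r = (⨅ s : S, mutInf (jointOut n (W s) E)) - ⨆ s : S, mutInf (jointOut n (V s) E)}

section Entropy

variable {α β : Type*} [Fintype α] [Fintype β]

noncomputable def ent (p : α → ℝ) : ℝ :=
  -∑ a, p a * Real.logb 2 (p a)

lemma ent_eq_sum_negMulLog (p : α → ℝ) : ent p = ∑ a, Real.negMulLog (p a) / Real.log 2 := by
  simp only [ent, Real.negMulLog, Real.logb, ← Finset.sum_neg_distrib]
  exact Finset.sum_congr rfl fun a _ => by ring

lemma continuous_ent : Continuous (ent (α := α)) := by
  simp only [funext ent_eq_sum_negMulLog]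
  fun_prop

lemma ent_const_mul (c : ℝ) (p : α → ℝ) :
    ent (fun a => c * p a) = c * ent p + Real.negMulLog c / Real.log 2 * ∑ a, p a := by
  simp only [ent_eq_sum_negMulLog, Real.negMulLog_mul, Finset.mul_sum, ← Finset.sum_add_distrib]
  exact Finset.sum_congr rfl fun a _ => by ring

lemma ent_comp_equiv (e : α ≃ β) (p : β → ℝ) : ent (p ∘ e) = ent p := by
  simp only [ent, Function.comp_apply, Fintype.sum_equiv e _ (fun b => p b * Real.logb 2 (p b))
    fun _ => rfl]

lemma ent_prod (P : α × β → ℝ) : ent P = ∑ a, ent (fun b => P (a, b)) := by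
  simp only [ent, Fintype.sum_prod_type, Finset.sum_neg_distrib]

lemma ent_sub_ent_of_sum_eq {p q : α → ℝ} {s : ℝ} (hs : s ≠ 0) (hp : ∑ a, p a = s)
    (hq : ∑ a, q a = s) :
    ent p - ent q = s * (ent (fun a => p a / s) - ent (fun a => q a / s)) := by
  have rescale : ∀ r : α → ℝ, ent r = ent (fun a => s * (r a / s)) := fun r => by
    congr 1; funext a; field_simp
  rw [rescale p, rescale q, ent_const_mul, ent_const_mul]
  simp only [← Finset.sum_div, hp, hq]
  ring

lemma IsProb.le_one {p : α → ℝ} (hp : IsProb p) (a : α) : p a ≤ 1 :=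
  hp.2 ▸ Finset.single_le_sum (fun b _ => hp.1 b) (Finset.mem_univ a)

end Entropy

def EntropyModulus (Y : Type*) [Fintype Y] (δ ω : ℝ) : Prop :=
  ∀ p q : Y → ℝ, IsProb p → IsProb q → ∑ y, |p y - q y| ≤ δ → |ent p - ent q| ≤ ω

lemma EntropyModulus.mono {Y : Type*} [Fintype Y] {δ δ' ω : ℝ} (h : EntropyModulus Y δ ω)
    (hδ : δ' ≤ δ) : EntropyModulus Y δ' ω :=
  fun p q hp hq hpq => h p q hp hq (hpq.trans hδ)

lemma exists_entropyModulus (Y : Type*) [Fintype Y] {ω : ℝ} (hω : 0 < ω) :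
    ∃ δ > 0, EntropyModulus Y δ ω := by
  have hK : IsCompact (Set.Icc (0 : Y → ℝ) 1) := isCompact_Icc
  obtain ⟨δ, hδ, h⟩ := Metric.uniformContinuousOn_iff_le.1
    (hK.uniformContinuousOn_of_continuous continuous_ent.continuousOn) ω hω
  refine ⟨δ, hδ, fun p q hp hq hpq => ?_⟩
  have mem : ∀ {p : Y → ℝ}, IsProb p → p ∈ Set.Icc 0 1 := fun hp =>
    ⟨fun a => hp.1 a, fun a => hp.le_one a⟩
  refine h p (mem hp) q (mem hq) ((dist_pi_le_iff hδ.le).2 fun a => ?_)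
  exact (Finset.single_le_sum (f := fun b => |p b - q b|) (fun b _ => abs_nonneg _)
    (Finset.mem_univ a)).trans hpq

section Channel

variable {X Y X' Y' : Type*}

noncomputable def chanOut [Fintype X] (C : X → Y → ℝ) (μ : X → ℝ) : Y → ℝ :=
  fun y => ∑ x, μ x * C x y

def prodChannel (A : X → Y → ℝ) (B : X' → Y' → ℝ) : X × X' → Y × Y' → ℝ :=
  fun x y => A x.1 y.1 * B x.2 y.2

def memoryless (W : X → Y → ℝ) (n : ℕ) : (Fin n → X) → (Fin n → Y) → ℝ :=
  fun x y => ∏ i, W (x i) (y i)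

lemma chanOut_nonneg [Fintype X] {C : X → Y → ℝ} {μ : X → ℝ} (hC : ∀ x y, 0 ≤ C x y)
    (hμ : ∀ x, 0 ≤ μ x) (y : Y) : 0 ≤ chanOut C μ y :=
  Finset.sum_nonneg fun x _ => mul_nonneg (hμ x) (hC x y)

lemma sum_chanOut [Fintype X] [Fintype Y] {C : X → Y → ℝ} (hC : IsChannel C) (μ : X → ℝ) :
    ∑ y, chanOut C μ y = ∑ x, μ x := by
  simp only [chanOut]
  rw [Finset.sum_comm]
  exact Finset.sum_congr rfl fun x _ => by rw [← Finset.mul_sum, (hC x).2, mul_one]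

lemma IsProb.chanOut [Fintype X] [Fintype Y] {C : X → Y → ℝ} (hC : IsChannel C) {μ : X → ℝ}
    (hμ : IsProb μ) :
    IsProb (chanOut C μ) :=
  ⟨chanOut_nonneg (fun x y => (hC x).1 y) hμ.1, by rw [sum_chanOut hC, hμ.2]⟩

lemma chanOut_mul_sum [Fintype X] {U : Type*} [Fintype U] (C : X → Y → ℝ) (c : ℝ)
    (μ : U → X → ℝ) :
    chanOut C (fun x => c * ∑ u, μ u x) = fun y => c * ∑ u, chanOut C (μ u) y := by
  funext y
  simp only [chanOut, Finset.mul_sum, Finset.sum_mul]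
  rw [Finset.sum_comm]
  exact Finset.sum_congr rfl fun u _ => Finset.sum_congr rfl fun x _ => by ring

lemma chanOut_div [Fintype X] (C : X → Y → ℝ) (μ : X → ℝ) (s : ℝ) :
    chanOut C (fun x => μ x / s) = fun y => chanOut C μ y / s := by
  funext y
  simp only [chanOut, Finset.sum_div]
  exact Finset.sum_congr rfl fun x _ => by ring

lemma chanOut_comp_equiv [Fintype X] [Fintype X'] (e : X ≃ X') (f : Y ≃ Y') (C : X' → Y' → ℝ)
    (μ : X → ℝ) :
    chanOut (fun x y => C (e x) (f y)) μ = chanOut C (μ ∘ e.symm) ∘ f := by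
  funext y
  exact Fintype.sum_equiv e _ _ fun x => by simp

lemma sum_abs_chanOut_sub_le [Fintype X] [Fintype Y] {C C' : X → Y → ℝ} {δ : ℝ}
    (hd : ∀ x, ∑ y, |C x y - C' x y| ≤ δ) {μ : X → ℝ} (hμ : ∀ x, 0 ≤ μ x) :
    ∑ y, |chanOut C μ y - chanOut C' μ y| ≤ δ * ∑ x, μ x := by
  calc ∑ y, |chanOut C μ y - chanOut C' μ y|
      ≤ ∑ y, ∑ x, μ x * |C x y - C' x y| := by
        refine Finset.sum_le_sum fun y _ => ?_
        simp only [chanOut, ← Finset.sum_sub_distrib, ← mul_sub]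
        refine (Finset.abs_sum_le_sum_abs _ _).trans_eq ?_
        simp only [abs_mul, abs_of_nonneg (hμ _)]
    _ = ∑ x, μ x * ∑ y, |C x y - C' x y| := by
        rw [Finset.sum_comm]; simp only [Finset.mul_sum]
    _ ≤ ∑ x, μ x * δ := Finset.sum_le_sum fun x _ => mul_le_mul_of_nonneg_left (hd x) (hμ x)
    _ = δ * ∑ x, μ x := by rw [Finset.mul_sum]; simp only [mul_comm]

lemma isChannel_memoryless [Fintype Y] {W : X → Y → ℝ} (hW : IsChannel W) (n : ℕ) :
    IsChannel (memoryless W n) := by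
  classical
  refine fun x => ⟨fun y => Finset.prod_nonneg fun i _ => (hW (x i)).1 (y i), ?_⟩
  simp only [memoryless, ← Fintype.prod_sum (fun i b => W (x i) b), (hW _).2,
    Finset.prod_const_one]

lemma prodChannel_comm (A : X → Y → ℝ) (B : X' → Y' → ℝ) :
    prodChannel A B
      = fun x y => prodChannel B A (Equiv.prodComm X X' x) (Equiv.prodComm Y Y' y) := by
  funext x y
  exact mul_comm _ _

lemma memoryless_succ (W : X → Y → ℝ) (n : ℕ) :
    memoryless W (n + 1) = fun x y => prodChannel W (memoryless W n)
      ((Fin.consEquiv fun _ => X).symm x) ((Fin.consEquiv fun _ => Y).symm y) := by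
  funext x y
  exact Fin.prod_univ_succ _

end Channel

section OutputEntropyClose

variable {X Y X' Y' : Type*} [Fintype X] [Fintype Y] [Fintype X'] [Fintype Y']

def OutputEntropyClose (C C' : X → Y → ℝ) (c : ℝ) : Prop :=
  ∀ μ : X → ℝ, IsProb μ → |ent (chanOut C μ) - ent (chanOut C' μ)| ≤ c

lemma outputEntropyClose_of_dChan_le {C C' : X → Y → ℝ} (hC : IsChannel C) (hC' : IsChannel C')
    {δ ω : ℝ} (hd : dChan C C' ≤ δ) (hmod : EntropyModulus Y δ ω) :
    OutputEntropyClose C C' ω := fun μ hμ =>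
  hmod _ _ (hμ.chanOut hC) (hμ.chanOut hC') <| by
    have hrow : ∀ x, ∑ y, |C x y - C' x y| ≤ δ := fun x =>
      (le_ciSup (Set.finite_range fun x => ∑ y, |C x y - C' x y|).bddAbove x).trans hd
    simpa [hμ.2] using sum_abs_chanOut_sub_le hrow hμ.1

lemma OutputEntropyClose.comp_equiv {C C' : X' → Y' → ℝ} {c : ℝ} (h : OutputEntropyClose C C' c)
    (e : X ≃ X') (f : Y ≃ Y') :
    OutputEntropyClose (fun x y => C (e x) (f y)) (fun x y => C' (e x) (f y)) c := by
  intro μ hμ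
  have hμ' : IsProb (μ ∘ e.symm) :=
    ⟨fun x => hμ.1 _, by rw [← hμ.2]; exact Fintype.sum_equiv e.symm _ _ fun _ => rfl⟩
  simpa only [chanOut_comp_equiv, ent_comp_equiv] using h _ hμ'

lemma OutputEntropyClose.abs_sub_le_mul_sum {C C' : X → Y → ℝ} {c : ℝ}
    (h : OutputEntropyClose C C' c) (hC : IsChannel C) (hC' : IsChannel C') {ν : X → ℝ}
    (hν : ∀ x, 0 ≤ ν x) : |ent (chanOut C ν) - ent (chanOut C' ν)| ≤ (∑ x, ν x) * c := by
  set s := ∑ x, ν x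
  rcases eq_or_ne s 0 with hs | hs
  · have hν0 : ν = 0 := funext fun x => (Finset.sum_eq_zero_iff_of_nonneg fun x _ => hν x).1 hs x
      (Finset.mem_univ x)
    simp [hν0, hs, chanOut, ent]
  have hprob : IsProb fun x => ν x / s :=
    ⟨fun x => div_nonneg (hν x) (Finset.sum_nonneg fun x _ => hν x), by
      rw [← Finset.sum_div, div_self hs]⟩
  rw [ent_sub_ent_of_sum_eq hs (sum_chanOut hC ν) (sum_chanOut hC' ν), abs_mul,
    abs_of_nonneg (Finset.sum_nonneg fun x _ => hν x), ← chanOut_div, ← chanOut_div]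
  exact mul_le_mul_of_nonneg_left (h _ hprob) (Finset.sum_nonneg fun x _ => hν x)

/-- Conditioning on the first output coordinate reduces the comparison to the second factor. -/
lemma OutputEntropyClose.prod_right {A : X → Y → ℝ} {B B' : X' → Y' → ℝ} {c : ℝ}
    (h : OutputEntropyClose B B' c) (hA : IsChannel A) (hB : IsChannel B) (hB' : IsChannel B') :
    OutputEntropyClose (prodChannel A B) (prodChannel A B') c := by
  intro μ hμ
  set ν : Y → X' → ℝ := fun y x' => ∑ x, μ (x, x') * A x y
  have hν : ∀ y x', 0 ≤ ν y x' := fun y x' =>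
    Finset.sum_nonneg fun x _ => mul_nonneg (hμ.1 _) ((hA x).1 y)
  have hrow : ∀ (D : X' → Y' → ℝ) y, (fun y' => chanOut (prodChannel A D) μ (y, y'))
      = chanOut D (ν y) := fun D y => by
    funext y'
    simp only [chanOut, prodChannel, ν, Fintype.sum_prod_type, Finset.sum_mul]
    rw [Finset.sum_comm]
    exact Finset.sum_congr rfl fun x' _ => Finset.sum_congr rfl fun x _ => by ring
  have hmass : ∑ y, ∑ x', ν y x' = 1 :=
    calc ∑ y, ∑ x', ν y x' = ∑ x', ∑ x, μ (x, x') * ∑ y, A x y := by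
          simp only [ν, Finset.mul_sum]
          rw [Finset.sum_comm]
          exact Finset.sum_congr rfl fun x' _ => Finset.sum_comm
      _ = 1 := by
          simp only [(hA _).2, mul_one]
          rw [← hμ.2, Fintype.sum_prod_type, Finset.sum_comm]
  rw [ent_prod, ent_prod, ← Finset.sum_sub_distrib]
  calc |∑ y, (ent (fun y' => chanOut (prodChannel A B) μ (y, y'))
          - ent (fun y' => chanOut (prodChannel A B') μ (y, y')))|
      ≤ ∑ y, (∑ x', ν y x') * c := by
        refine (Finset.abs_sum_le_sum_abs _ _).trans (Finset.sum_le_sum fun y _ => ?_)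
        rw [hrow, hrow]
        exact h.abs_sub_le_mul_sum hB hB' (hν y)
    _ = c := by rw [← Finset.sum_mul, hmass, one_mul]

lemma OutputEntropyClose.prod_left {A A' : X → Y → ℝ} {B : X' → Y' → ℝ} {c : ℝ}
    (h : OutputEntropyClose A A' c) (hA : IsChannel A) (hA' : IsChannel A') (hB : IsChannel B) :
    OutputEntropyClose (prodChannel A B) (prodChannel A' B) c := by
  rw [prodChannel_comm A, prodChannel_comm A']
  exact (h.prod_right hB hA hA').comp_equiv _ _

lemma OutputEntropyClose.prod {A A' : X → Y → ℝ} {B B' : X' → Y' → ℝ} {c₁ c₂ : ℝ}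
    (hAc : OutputEntropyClose A A' c₁) (hBc : OutputEntropyClose B B' c₂) (hA : IsChannel A)
    (hA' : IsChannel A') (hB : IsChannel B) (hB' : IsChannel B') :
    OutputEntropyClose (prodChannel A B) (prodChannel A' B') (c₁ + c₂) := fun μ hμ =>
  calc _ ≤ |ent (chanOut (prodChannel A B) μ) - ent (chanOut (prodChannel A B') μ)|
        + |ent (chanOut (prodChannel A B') μ) - ent (chanOut (prodChannel A' B') μ)| :=
        abs_sub_le _ _ _
    _ ≤ c₂ + c₁ := add_le_add (hBc.prod_right hA hB hB' μ hμ)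
        (hAc.prod_left hA hA' hB' μ hμ)
    _ = c₁ + c₂ := add_comm _ _

/-- The hybrid argument: exchanging the letters of `Wⁿ` one at a time. -/
lemma outputEntropyClose_memoryless {W W' : X → Y → ℝ} {ω : ℝ} (h : OutputEntropyClose W W' ω)
    (hW : IsChannel W) (hW' : IsChannel W') (n : ℕ) :
    OutputEntropyClose (memoryless W n) (memoryless W' n) (n * ω) := by
  induction n with
  | zero =>
    intro μ _
    have : memoryless W 0 = memoryless W' 0 := by
      funext x y; simp [memoryless]
    simp [this]
  | succ n ih =>
    have key := (h.prod ih hW hW' (isChannel_memoryless hW n)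
      (isChannel_memoryless hW' n)).comp_equiv (Fin.consEquiv fun _ => X).symm
        (Fin.consEquiv fun _ => Y).symm
    rw [← memoryless_succ, ← memoryless_succ] at key
    convert key using 1
    push_cast
    ring

end OutputEntropyClose

section MutualInformation

variable {U X Y : Type*} [Fintype U] [Fintype X]

lemma jointOut_eq_chanOut (n : ℕ) (W : X → Y → ℝ) (E : U → (Fin n → X) → ℝ) :
    jointOut n W E
      = fun p => (Fintype.card U : ℝ)⁻¹ * chanOut (memoryless W n) (E p.1) p.2 := by
  funext p
  simp only [jointOut, chanOut, memoryless, Finset.mul_sum]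
  exact Finset.sum_congr rfl fun x _ => by ring

lemma mutInf_uniform_mixture [Fintype Y] [Nonempty U] {q : U → Y → ℝ} (hq : ∀ u, IsProb (q u)) :
    mutInf (fun p : U × Y => (Fintype.card U : ℝ)⁻¹ * q p.1 p.2)
      = ent (fun y => (Fintype.card U : ℝ)⁻¹ * ∑ u, q u y)
        - (Fintype.card U : ℝ)⁻¹ * ∑ u, ent (q u) := by
  set c : ℝ := (Fintype.card U : ℝ)⁻¹
  have hc : 0 < c := inv_pos.2 (Nat.cast_pos.2 Fintype.card_pos)
  set qbar : Y → ℝ := fun y => c * ∑ u, q u y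
  have hterm : ∀ u y, c * q u y * Real.logb 2 (c * q u y / ((∑ y', c * q u y') * ∑ u', c * q u' y))
      = c * (q u y * Real.logb 2 (q u y)) - c * q u y * Real.logb 2 (qbar y) := by
    intro u y
    rcases ((hq u).1 y).eq_or_lt with h | h
    · simp [← h]
    have hqbar : 0 < qbar y := mul_pos hc <| h.trans_le <|
      Finset.single_le_sum (f := fun u' => q u' y) (fun u' _ => (hq u').1 y) (Finset.mem_univ u)
    rw [← Finset.mul_sum, (hq u).2, mul_one, ← Finset.mul_sum, mul_div_mul_left _ _ hc.ne',
      Real.logb_div h.ne' hqbar.ne']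
    ring
  simp only [mutInf, hterm, Finset.sum_sub_distrib]
  rw [Finset.sum_comm (f := fun u y => c * q u y * Real.logb 2 (qbar y))]
  simp only [ent, qbar, ← Finset.sum_mul, ← Finset.mul_sum, Finset.sum_neg_distrib]
  ring

lemma isProb_uniform_mixture [Nonempty U] {μ : U → X → ℝ} (hμ : ∀ u, IsProb (μ u)) :
    IsProb fun x => (Fintype.card U : ℝ)⁻¹ * ∑ u, μ u x := by
  refine ⟨fun x => mul_nonneg (by positivity) (Finset.sum_nonneg fun u _ => (hμ u).1 x), ?_⟩
  rw [← Finset.mul_sum, Finset.sum_comm]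
  simp only [fun u => (hμ u).2, Finset.sum_const, Finset.card_univ, nsmul_eq_mul, mul_one]
  exact inv_mul_cancel₀ (Nat.cast_ne_zero.2 Fintype.card_ne_zero)

/-- Both terms of `I(U;Yⁿ) = H(Yⁿ) - H(Yⁿ|U)` move by at most `c`. -/
lemma abs_mutInf_jointOut_sub_le [Fintype Y] [Nonempty U] {W W' : X → Y → ℝ} (hW : IsChannel W)
    (hW' : IsChannel W') {n : ℕ} {c : ℝ}
    (h : OutputEntropyClose (memoryless W n) (memoryless W' n) c)
    {E : U → (Fin n → X) → ℝ} (hE : ∀ u, IsProb (E u)) :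
    |mutInf (jointOut n W E) - mutInf (jointOut n W' E)| ≤ 2 * c := by
  set ℓ : ℝ := (Fintype.card U : ℝ)⁻¹
  have hℓ : 0 ≤ ℓ := by positivity
  rw [jointOut_eq_chanOut, jointOut_eq_chanOut,
    mutInf_uniform_mixture fun u => (hE u).chanOut (isChannel_memoryless hW n),
    mutInf_uniform_mixture fun u => (hE u).chanOut (isChannel_memoryless hW' n),
    ← chanOut_mul_sum, ← chanOut_mul_sum, sub_sub_sub_comm, ← mul_sub, ← Finset.sum_sub_distrib]
  have hout := h _ (isProb_uniform_mixture hE)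
  have hcond : |ℓ * ∑ u, (ent (chanOut (memoryless W n) (E u))
      - ent (chanOut (memoryless W' n) (E u)))| ≤ c := by
    rw [abs_mul, abs_of_nonneg hℓ]
    calc ℓ * |∑ u, _| ≤ ℓ * ∑ _u : U, c :=
          mul_le_mul_of_nonneg_left ((Finset.abs_sum_le_sum_abs _ _).trans
            (Finset.sum_le_sum fun u _ => h _ (hE u))) hℓ
      _ = c := by
          rw [Finset.sum_const, Finset.card_univ, nsmul_eq_mul, ← mul_assoc,
            inv_mul_cancel₀ (Nat.cast_ne_zero.2 Fintype.card_ne_zero), one_mul]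
  exact (abs_sub _ _).trans (by linarith)

end MutualInformation

section SupInf

/-- This includes the junk value `sSup = 0`: the two sets are empty, resp. unbounded above,
simultaneously. -/
lemma abs_sSup_sub_sSup_le {A B : Set ℝ} {c : ℝ} (hc : 0 ≤ c)
    (hAB : ∀ a ∈ A, ∃ b ∈ B, |a - b| ≤ c) (hBA : ∀ b ∈ B, ∃ a ∈ A, |a - b| ≤ c) :
    |sSup A - sSup B| ≤ c := by
  rcases A.eq_empty_or_nonempty with rfl | hA
  · rcases B.eq_empty_or_nonempty with rfl | ⟨b, hb⟩
    · simpa using hc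
    · obtain ⟨a, ha, -⟩ := hBA b hb
      exact absurd ha (Set.notMem_empty a)
  obtain ⟨b₀, hb₀⟩ : B.Nonempty := let ⟨a, ha⟩ := hA; let ⟨b, hb, _⟩ := hAB a ha; ⟨b, hb⟩
  have bdd : ∀ {A B : Set ℝ}, (∀ b ∈ B, ∃ a ∈ A, |a - b| ≤ c) → BddAbove A → BddAbove B :=
    fun hBA ⟨M, hM⟩ => ⟨M + c, fun b hb => let ⟨a, ha, hab⟩ := hBA b hb
      by linarith [hM ha, (abs_le.1 hab).1]⟩
  by_cases hbA : BddAbove A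
  · have hbB := bdd hBA hbA
    rw [abs_sub_le_iff]
    constructor
    · refine sub_le_iff_le_add'.2 (csSup_le hA fun a ha => ?_)
      obtain ⟨b, hb, hab⟩ := hAB a ha
      linarith [le_csSup hbB hb, (abs_le.1 hab).2]
    · refine sub_le_iff_le_add'.2 (csSup_le ⟨b₀, hb₀⟩ fun b hb => ?_)
      obtain ⟨a, ha, hab⟩ := hBA b hb
      linarith [le_csSup hbA ha, (abs_le.1 hab).1]
  · have hbB : ¬BddAbove B := fun h => hbA <| bdd (fun a ha => let ⟨b, hb, hab⟩ := hAB a ha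
      ⟨b, hb, by rwa [abs_sub_comm]⟩) h
    simpa [Real.sSup_of_not_bddAbove hbA, Real.sSup_of_not_bddAbove hbB] using hc

lemma abs_sInf_sub_sInf_le {A B : Set ℝ} {c : ℝ} (hc : 0 ≤ c)
    (hAB : ∀ a ∈ A, ∃ b ∈ B, |a - b| ≤ c) (hBA : ∀ b ∈ B, ∃ a ∈ A, |a - b| ≤ c) :
    |sInf A - sInf B| ≤ c := by
  rw [Real.sInf_def, Real.sInf_def, neg_sub_neg, abs_sub_comm]
  refine abs_sSup_sub_sSup_le hc (fun a ha => ?_) (fun b hb => ?_)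
  · obtain ⟨b, hb, hab⟩ := hAB (-a) ha
    exact ⟨-b, by simpa using hb, by rw [← abs_neg]; convert hab using 2; ring⟩
  · obtain ⟨a, ha, hab⟩ := hBA (-b) hb
    exact ⟨-a, by simpa using ha, by rw [← abs_neg]; convert hab using 2; ring⟩

variable {ι κ : Type*} {f : ι → ℝ} {g : κ → ℝ} {c : ℝ}

lemma abs_iSup_sub_iSup_le (hc : 0 ≤ c) (hfg : ∀ i, ∃ j, |f i - g j| ≤ c)
    (hgf : ∀ j, ∃ i, |f i - g j| ≤ c) : |(⨆ i, f i) - ⨆ j, g j| ≤ c :=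
  abs_sSup_sub_sSup_le hc (by rintro _ ⟨i, rfl⟩; obtain ⟨j, h⟩ := hfg i; exact ⟨_, ⟨j, rfl⟩, h⟩)
    (by rintro _ ⟨j, rfl⟩; obtain ⟨i, h⟩ := hgf j; exact ⟨_, ⟨i, rfl⟩, h⟩)

lemma abs_iInf_sub_iInf_le (hc : 0 ≤ c) (hfg : ∀ i, ∃ j, |f i - g j| ≤ c)
    (hgf : ∀ j, ∃ i, |f i - g j| ≤ c) : |(⨅ i, f i) - ⨅ j, g j| ≤ c :=
  abs_sInf_sub_sInf_le hc (by rintro _ ⟨i, rfl⟩; obtain ⟨j, h⟩ := hfg i; exact ⟨_, ⟨j, rfl⟩, h⟩)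
    (by rintro _ ⟨j, rfl⟩; obtain ⟨i, h⟩ := hgf j; exact ⟨_, ⟨i, rfl⟩, h⟩)

lemma exists_lt_of_iSup_iInf_lt [Nonempty κ] {F : ι → κ → ℝ} {B δ : ℝ}
    (h0 : ∀ i j, 0 ≤ F i j) (hB : ∀ i j, F i j ≤ B) (h : ⨆ i, ⨅ j, F i j < δ) (i : ι) :
    ∃ j, F i j < δ := by
  obtain ⟨j₀⟩ := ‹Nonempty κ›
  have hbdd : BddAbove (Set.range fun i => ⨅ j, F i j) := ⟨B, by
    rintro _ ⟨i', rfl⟩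
    exact (ciInf_le ⟨0, by rintro _ ⟨j, rfl⟩; exact h0 i' j⟩ j₀).trans (hB i' j₀)⟩
  exact exists_lt_of_ciInf_lt ((le_ciSup hbdd i).trans_lt h)

end SupInf

lemma dChan_nonneg {X Y : Type*} [Fintype Y] (W W' : X → Y → ℝ) : 0 ≤ dChan W W' :=
  Real.iSup_nonneg fun _ => Finset.sum_nonneg fun _ _ => abs_nonneg _

lemma dChan_le_two {X Y : Type*} [Fintype Y] {W W' : X → Y → ℝ} (hW : IsChannel W)
    (hW' : IsChannel W') :
    dChan W W' ≤ 2 := by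
  refine Real.iSup_le (fun x => ?_) zero_le_two
  calc ∑ y, |W x y - W' x y| ≤ ∑ y, (W x y + W' x y) := Finset.sum_le_sum fun y _ => by
        simpa only [abs_of_nonneg ((hW x).1 y), abs_of_nonneg ((hW' x).1 y)]
          using abs_sub (W x y) (W' x y)
    _ = 2 := by rw [Finset.sum_add_distrib, (hW x).2, (hW' x).2]; norm_num

section Compound

variable {X Y Z : Type*} [Fintype X] [Fintype Y] [Fintype Z]

lemma abs_mutInf_jointOut_sub_le_of_dChan_le {U : Type*} [Fintype U] [Nonempty U]
    {W W' : X → Y → ℝ} (hW : IsChannel W) (hW' : IsChannel W') {δ ω : ℝ} (hd : dChan W W' ≤ δ)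
    (hmod : EntropyModulus Y δ ω) {n : ℕ} {E : U → (Fin n → X) → ℝ} (hE : ∀ u, IsProb (E u)) :
    |mutInf (jointOut n W E) - mutInf (jointOut n W' E)| ≤ 2 * (n * ω) :=
  abs_mutInf_jointOut_sub_le hW hW' (outputEntropyClose_memoryless
    (outputEntropyClose_of_dChan_le hW hW' hd hmod) hW hW' n) hE

noncomputable def secrecyGap {S U : Type*} [Fintype U] (W : S → X → Y → ℝ) (V : S → X → Z → ℝ)
    {n : ℕ} (E : U → (Fin n → X) → ℝ) : ℝ :=
  (⨅ s, mutInf (jointOut n (W s) E)) - ⨆ s, mutInf (jointOut n (V s) E)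

lemma secF_eq_sSup_secrecyGap {S : Type*} (W : S → X → Y → ℝ) (V : S → X → Z → ℝ) (n : ℕ) :
    secF W V n = (1 / (n : ℝ)) * sSup {r : ℝ | ∃ (k : ℕ) (E : Fin (k + 1) → (Fin n → X) → ℝ),
      (∀ u, IsProb (E u)) ∧ r = secrecyGap W V E} :=
  rfl

variable {S₁ S₂ : Type*} [Nonempty S₁] [Nonempty S₂]
  {W₁ : S₁ → X → Y → ℝ} {V₁ : S₁ → X → Z → ℝ} {W₂ : S₂ → X → Y → ℝ} {V₂ : S₂ → X → Z → ℝ}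
  {δ ωY ωZ : ℝ}

lemma abs_secrecyGap_sub_le (hW₁ : ∀ s, IsChannel (W₁ s)) (hV₁ : ∀ s, IsChannel (V₁ s))
    (hW₂ : ∀ s, IsChannel (W₂ s)) (hV₂ : ∀ s, IsChannel (V₂ s))
    (hD : Dcwc W₁ V₁ W₂ V₂ < δ) (hmodY : EntropyModulus Y δ ωY) (hmodZ : EntropyModulus Z δ ωZ)
    (hωY : 0 ≤ ωY) (hωZ : 0 ≤ ωZ) {U : Type*} [Fintype U] [Nonempty U] {n : ℕ}
    {E : U → (Fin n → X) → ℝ} (hE : ∀ u, IsProb (E u)) :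
    |secrecyGap W₁ V₁ E - secrecyGap W₂ V₂ E| ≤ 2 * (n * ωY) + 2 * (n * ωZ) := by
  simp only [Dcwc, max_lt_iff] at hD
  obtain ⟨⟨hW21, hW12⟩, hV21, hV12⟩ := hD
  have closeW : ∀ s₁ s₂, dChan (W₁ s₁) (W₂ s₂) < δ →
      |mutInf (jointOut n (W₁ s₁) E) - mutInf (jointOut n (W₂ s₂) E)| ≤ 2 * (n * ωY) :=
    fun s₁ s₂ hd => abs_mutInf_jointOut_sub_le_of_dChan_le (hW₁ s₁) (hW₂ s₂) hd.le hmodY hE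
  have closeV : ∀ s₁ s₂, dChan (V₁ s₁) (V₂ s₂) < δ →
      |mutInf (jointOut n (V₁ s₁) E) - mutInf (jointOut n (V₂ s₂) E)| ≤ 2 * (n * ωZ) :=
    fun s₁ s₂ hd => abs_mutInf_jointOut_sub_le_of_dChan_le (hV₁ s₁) (hV₂ s₂) hd.le hmodZ hE
  have boundW : ∀ s₁ s₂, dChan (W₁ s₁) (W₂ s₂) ≤ 2 := fun s₁ s₂ => dChan_le_two (hW₁ s₁) (hW₂ s₂)
  have boundV : ∀ s₁ s₂, dChan (V₁ s₁) (V₂ s₂) ≤ 2 := fun s₁ s₂ => dChan_le_two (hV₁ s₁) (hV₂ s₂)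
  have hinf := abs_iInf_sub_iInf_le (by positivity)
    (fun s₁ => (exists_lt_of_iSup_iInf_lt (fun _ _ => dChan_nonneg _ _) boundW hW12 s₁).imp
      fun s₂ => closeW s₁ s₂)
    (fun s₂ => (exists_lt_of_iSup_iInf_lt (fun _ _ => dChan_nonneg _ _)
      (fun s₂ s₁ => boundW s₁ s₂) hW21 s₂).imp fun s₁ => closeW s₁ s₂)
  have hsup := abs_iSup_sub_iSup_le (by positivity)
    (fun s₁ => (exists_lt_of_iSup_iInf_lt (fun _ _ => dChan_nonneg _ _) boundV hV12 s₁).imp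
      fun s₂ => closeV s₁ s₂)
    (fun s₂ => (exists_lt_of_iSup_iInf_lt (fun _ _ => dChan_nonneg _ _)
      (fun s₂ s₁ => boundV s₁ s₂) hV21 s₂).imp fun s₁ => closeV s₁ s₂)
  rw [secrecyGap, secrecyGap, sub_sub_sub_comm]
  exact (abs_sub _ _).trans (add_le_add hinf hsup)

lemma abs_secF_sub_le (hW₁ : ∀ s, IsChannel (W₁ s)) (hV₁ : ∀ s, IsChannel (V₁ s))
    (hW₂ : ∀ s, IsChannel (W₂ s)) (hV₂ : ∀ s, IsChannel (V₂ s))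
    (hD : Dcwc W₁ V₁ W₂ V₂ < δ) (hmodY : EntropyModulus Y δ ωY) (hmodZ : EntropyModulus Z δ ωZ)
    (hωY : 0 ≤ ωY) (hωZ : 0 ≤ ωZ) (n : ℕ) :
    |secF W₁ V₁ n - secF W₂ V₂ n| ≤ 2 * ωY + 2 * ωZ := by
  have gap := fun {k : ℕ} {E : Fin (k + 1) → (Fin n → X) → ℝ} (hE : ∀ u, IsProb (E u)) =>
    abs_secrecyGap_sub_le hW₁ hV₁ hW₂ hV₂ hD hmodY hmodZ hωY hωZ hE
  rcases n.eq_zero_or_pos with rfl | hn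
  · simp only [secF, Nat.cast_zero, div_zero, zero_mul, sub_self, abs_zero]
    positivity
  rw [secF_eq_sSup_secrecyGap, secF_eq_sSup_secrecyGap, ← mul_sub, abs_mul,
    abs_of_pos (by positivity : (0 : ℝ) < 1 / n)]
  calc _ ≤ 1 / (n : ℝ) * (2 * (n * ωY) + 2 * (n * ωZ)) := by
        refine mul_le_mul_of_nonneg_left (abs_sSup_sub_sSup_le (by positivity) ?_ ?_)
          (by positivity)
        all_goals rintro _ ⟨k, E, hE, rfl⟩
        exacts [⟨_, ⟨k, E, hE, rfl⟩, gap hE⟩, ⟨_, ⟨k, E, hE, rfl⟩, gap hE⟩]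
    _ = 2 * ωY + 2 * ωZ := by field_simp

end Compound

/-- if compound wiretap channels `𝔚_n` converge to `𝔚` in `D`-distance, then
their multi-letter secrecy capacities converge to that of `𝔚`. -/
theorem compound_secrecy_capacity_limit {X Y Z : Type*}
    [Fintype X] [Fintype Y] [Fintype Z] {S : Type*} [Nonempty S]
    {S' : ℕ → Type*} [∀ n, Nonempty (S' n)]
    (W : S → X → Y → ℝ) (V : S → X → Z → ℝ)
    (Wn : ∀ n, S' n → X → Y → ℝ) (Vn : ∀ n, S' n → X → Z → ℝ)
    (hW : ∀ s, IsChannel (W s)) (hV : ∀ s, IsChannel (V s))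
    (hWn : ∀ n s, IsChannel (Wn n s)) (hVn : ∀ n s, IsChannel (Vn n s))
    (hD : Filter.Tendsto (fun n : ℕ => Dcwc W V (Wn n) (Vn n)) Filter.atTop (nhds 0))
    (C : ℝ) (Cn : ℕ → ℝ)
    (hC : Filter.Tendsto (fun m : ℕ => secF W V m) Filter.atTop (nhds C))
    (hCn : ∀ n, Filter.Tendsto (fun m : ℕ => secF (Wn n) (Vn n) m) Filter.atTop (nhds (Cn n))) :
    Filter.Tendsto Cn Filter.atTop (nhds C) := by
  rw [Metric.tendsto_atTop]
  intro ε hε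
  have hω : 0 < ε / 5 := by positivity
  obtain ⟨δY, hδY, hmodY⟩ := exists_entropyModulus Y hω
  obtain ⟨δZ, hδZ, hmodZ⟩ := exists_entropyModulus Z hω
  obtain ⟨N, hN⟩ := Filter.eventually_atTop.1 (hD.eventually (gt_mem_nhds (lt_min hδY hδZ)))
  refine ⟨N, fun n hn => ?_⟩
  have hsecF : ∀ m, |secF W V m - secF (Wn n) (Vn n) m| ≤ 2 * (ε / 5) + 2 * (ε / 5) :=
    abs_secF_sub_le hW hV (hWn n) (hVn n) (hN n hn) (hmodY.mono (min_le_left _ _))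
      (hmodZ.mono (min_le_right _ _)) hω.le hω.le
  have hlim : |C - Cn n| ≤ 2 * (ε / 5) + 2 * (ε / 5) :=
    le_of_tendsto' ((hC.sub (hCn n)).abs) hsecF
  rw [Real.dist_eq, abs_sub_comm]
  linarith
end

section
/- Let W₁ = {W(·|·,s₁)}_{s₁∈S₁} be an AVC with finite alphabets X, Y and finite state set S₁ such that min_{σ,σ'} F(σ,σ',W₁) = δ > 0. Then there exists ε > 0 such that every AVC W₂ = {Ŵ(·|·,s₂)}_{s₂∈S₂} over the same alphabets with finite state set S₂ and D(W₁,W₂) < ε satisfies min_{σ,σ'} F(σ,σ',W₂) ≥ δ/2; in particular, every such AVC W₂ is non-symmetrizable. -/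
open Real Finset

/-- An AVC `W = {W(·|·,s)}_{s∈S}` is symmetrizable: there is a stochastic matrix
`σ : X → P(S)` with `∑_s W(y|x₁,s)σ(s|x₂) = ∑_s W(y|x₂,s)σ(s|x₁)` for all `x₁,x₂,y`. -/
def Symmetrizable {X Y S : Type*} [Fintype Y] [Fintype S] (W : S → X → Y → ℝ) : Prop :=
  ∃ σ : X → S → ℝ, IsChannel σ ∧
    ∀ x₁ x₂ y, (∑ s : S, W s x₁ y * σ x₂ s) = ∑ s : S, W s x₂ y * σ x₁ s

/-- Distance `D(W₁,W₂)` between two AVCs (families of channels). -/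
noncomputable def Davc {X Y : Type*} [Fintype Y] {S₁ S₂ : Type*}
    (W₁ : S₁ → X → Y → ℝ) (W₂ : S₂ → X → Y → ℝ) : ℝ :=
  max (⨆ s₂ : S₂, ⨅ s₁ : S₁, dChan (W₁ s₁) (W₂ s₂))
      (⨆ s₁ : S₁, ⨅ s₂ : S₂, dChan (W₁ s₁) (W₂ s₂))

/-- The symmetrizability gap function
`F(σ,σ',W) = ∑_{x₁,x₂,y} |∑_s W(y|x₁,s)σ(s|x₂) − ∑_s W(y|x₂,s)σ'(s|x₁)|`. -/
noncomputable def Fsym {X Y S : Type*} [Fintype X] [Fintype Y] [Fintype S]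
    (σ σ' : X → S → ℝ) (W : S → X → Y → ℝ) : ℝ :=
  ∑ x₁ : X, ∑ x₂ : X, ∑ y : Y,
    |(∑ s : S, W s x₁ y * σ x₂ s) - ∑ s : S, W s x₂ y * σ' x₁ s|

/-! The nearest-state map `f : S₂ → S₁` supplied by `D(W₁,W₂) < ε` turns any pair of
channels `σ, σ'` into `S₂` into channels into `S₁` by pushing them forward along `f`.
The gap `F` of the pushed pair for `W₁` equals the gap of `σ, σ'` for the relabelled AVC
`W₁ ∘ f`, which is `ε`-close to `W₂` state by state; since each of the `|X|²` terms of `F`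
moves by at most `2ε` under such a perturbation, `δ ≤ F(σ,σ',W₂) + 2|X|²ε`, and
`ε = δ / (4|X|²)` gives `F(σ,σ',W₂) ≥ δ/2`. A symmetrizing `σ` would have `F(σ,σ,W₂) = 0`. -/

section Perturbation

variable {X Y S : Type*} [Fintype X] [Fintype Y] [Fintype S]

lemma Fsym_nonneg (σ σ' : X → S → ℝ) (W : S → X → Y → ℝ) : 0 ≤ Fsym σ σ' W :=
  sum_nonneg fun _ _ => sum_nonneg fun _ _ => sum_nonneg fun _ _ => abs_nonneg _

omit [Fintype X] in
lemma sum_abs_sub_le_dChan [Finite X] (W W' : X → Y → ℝ) (x : X) :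
    ∑ y, |W x y - W' x y| ≤ dChan W W' :=
  le_ciSup (f := fun x => ∑ y, |W x y - W' x y|) (Set.finite_range _).bddAbove x

omit [Fintype X] in
lemma sum_abs_sub_le_sum_abs_sub_add (a b a' b' : Y → ℝ) :
    ∑ y, |a y - b y| ≤ ∑ y, |a' y - b' y| + ∑ y, |a y - a' y| + ∑ y, |b y - b' y| := by
  rw [← sum_add_distrib, ← sum_add_distrib]
  refine sum_le_sum fun y _ => ?_
  calc |a y - b y| ≤ |a y - a' y| + |a' y - b y| := abs_sub_le _ _ _
    _ ≤ |a y - a' y| + (|a' y - b' y| + |b' y - b y|) := by gcongr; exact abs_sub_le _ _ _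
    _ = |a' y - b' y| + |a y - a' y| + |b y - b' y| := by rw [abs_sub_comm (b' y)]; ring

omit [Fintype X] in
lemma sum_abs_mix_sub_le {p : S → ℝ} (hp : IsProb p) {A B : S → Y → ℝ} {ε : ℝ}
    (h : ∀ s, ∑ y, |A s y - B s y| ≤ ε) :
    ∑ y, |∑ s, A s y * p s - ∑ s, B s y * p s| ≤ ε :=
  calc ∑ y, |∑ s, A s y * p s - ∑ s, B s y * p s|
      ≤ ∑ y, ∑ s, |A s y - B s y| * p s := by
        refine sum_le_sum fun y _ => ?_
        rw [← sum_sub_distrib]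
        refine (abs_sum_le_sum_abs _ _).trans_eq (sum_congr rfl fun s _ => ?_)
        rw [← sub_mul, abs_mul, abs_of_nonneg (hp.1 s)]
    _ = ∑ s, (∑ y, |A s y - B s y|) * p s := by
        rw [sum_comm]; simp only [sum_mul]
    _ ≤ ∑ s, ε * p s := sum_le_sum fun s _ => mul_le_mul_of_nonneg_right (h s) (hp.1 s)
    _ = ε := by rw [← mul_sum, hp.2, mul_one]

lemma Fsym_le_Fsym_add_of_dChan_le {σ σ' : X → S → ℝ} (hσ : IsChannel σ) (hσ' : IsChannel σ')
    {V W : S → X → Y → ℝ} {ε : ℝ} (h : ∀ s, dChan (V s) (W s) ≤ ε) :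
    Fsym σ σ' V ≤ Fsym σ σ' W + 2 * Fintype.card X ^ 2 * ε := by
  have hpair : ∀ x₁ x₂,
      ∑ y, |∑ s, V s x₁ y * σ x₂ s - ∑ s, V s x₂ y * σ' x₁ s|
        ≤ ∑ y, |∑ s, W s x₁ y * σ x₂ s - ∑ s, W s x₂ y * σ' x₁ s| + 2 * ε := fun x₁ x₂ => by
    have hclose : ∀ x s, ∑ y, |V s x y - W s x y| ≤ ε :=
      fun x s => (sum_abs_sub_le_dChan _ _ x).trans (h s)
    linarith [sum_abs_sub_le_sum_abs_sub_add (fun y => ∑ s, V s x₁ y * σ x₂ s)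
        (fun y => ∑ s, V s x₂ y * σ' x₁ s) (fun y => ∑ s, W s x₁ y * σ x₂ s)
        (fun y => ∑ s, W s x₂ y * σ' x₁ s),
      sum_abs_mix_sub_le (hσ x₂) (hclose x₁), sum_abs_mix_sub_le (hσ' x₁) (hclose x₂)]
  calc Fsym σ σ' V ≤ ∑ x₁ : X, ∑ x₂ : X,
        (∑ y, |∑ s, W s x₁ y * σ x₂ s - ∑ s, W s x₂ y * σ' x₁ s| + 2 * ε) :=
      sum_le_sum fun x₁ _ => sum_le_sum fun x₂ _ => hpair x₁ x₂
    _ = Fsym σ σ' W + 2 * Fintype.card X ^ 2 * ε := by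
      simp only [Fsym, sum_add_distrib, sum_const, card_univ, nsmul_eq_mul]
      ring

end Perturbation

section Pushforward

variable {X Y S₁ S₂ : Type*} [Fintype S₁] [Fintype S₂] [DecidableEq S₁]

def pushforward (f : S₂ → S₁) (ρ : X → S₂ → ℝ) : X → S₁ → ℝ :=
  fun x s₁ => ∑ s₂ with f s₂ = s₁, ρ x s₂

lemma IsChannel.pushforward {ρ : X → S₂ → ℝ} (hρ : IsChannel ρ) (f : S₂ → S₁) :
    IsChannel (pushforward f ρ) := fun x =>
  ⟨fun _ => sum_nonneg fun s₂ _ => (hρ x).1 s₂, (sum_fiberwise univ f (ρ x)).trans (hρ x).2⟩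

lemma sum_mul_pushforward (f : S₂ → S₁) (ρ : X → S₂ → ℝ) (c : S₁ → ℝ) (x : X) :
    ∑ s₁, c s₁ * pushforward f ρ x s₁ = ∑ s₂, c (f s₂) * ρ x s₂ := by
  simp only [pushforward, mul_sum]
  rw [← sum_fiberwise univ f (fun s₂ => c (f s₂) * ρ x s₂)]
  exact sum_congr rfl fun s₁ _ => sum_congr rfl fun s₂ hs₂ => by rw [(mem_filter.1 hs₂).2]

lemma Fsym_pushforward [Fintype X] [Fintype Y] (f : S₂ → S₁) (σ σ' : X → S₂ → ℝ)
    (W : S₁ → X → Y → ℝ) :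
    Fsym (pushforward f σ) (pushforward f σ') W = Fsym σ σ' (fun s₂ => W (f s₂)) := by
  simp only [Fsym, sum_mul_pushforward]

end Pushforward

lemma exists_dChan_lt_of_Davc_lt {X Y S₁ S₂ : Type*} [Fintype Y] [Nonempty S₁] [Finite S₂]
    {W₁ : S₁ → X → Y → ℝ} {W₂ : S₂ → X → Y → ℝ} {ε : ℝ} (h : Davc W₁ W₂ < ε) (s₂ : S₂) :
    ∃ s₁, dChan (W₁ s₁) (W₂ s₂) < ε :=
  exists_lt_of_ciInf_lt <|
    (le_ciSup (Set.finite_range _).bddAbove s₂).trans_lt ((le_max_left _ _).trans_lt h)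

section GapValues

variable {X Y S : Type*} [Fintype X] [Fintype Y] [Fintype S]

def FsymValues (W : S → X → Y → ℝ) : Set ℝ :=
  {r | ∃ σ σ' : X → S → ℝ, IsChannel σ ∧ IsChannel σ' ∧ r = Fsym σ σ' W}

lemma le_Fsym_of_sInf_FsymValues_eq {W : S → X → Y → ℝ} {δ : ℝ} (h : sInf (FsymValues W) = δ)
    {σ σ' : X → S → ℝ} (hσ : IsChannel σ) (hσ' : IsChannel σ') : δ ≤ Fsym σ σ' W :=
  h ▸ csInf_le ⟨0, by rintro _ ⟨σ, σ', -, -, rfl⟩; exact Fsym_nonneg σ σ' W⟩ ⟨σ, σ', hσ, hσ', rfl⟩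

omit [Fintype X] in
lemma isChannel_uniform [Nonempty S] : IsChannel (fun (_ : X) (_ : S) => (Fintype.card S : ℝ)⁻¹) :=
  fun _ => ⟨fun _ => by positivity, by simp⟩

lemma le_sInf_FsymValues [Nonempty S] {W : S → X → Y → ℝ} {c : ℝ}
    (h : ∀ σ σ' : X → S → ℝ, IsChannel σ → IsChannel σ' → c ≤ Fsym σ σ' W) :
    c ≤ sInf (FsymValues W) :=
  le_csInf ⟨_, _, _, isChannel_uniform, isChannel_uniform, rfl⟩
    (by rintro _ ⟨σ, σ', hσ, hσ', rfl⟩; exact h σ σ' hσ hσ')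

lemma Symmetrizable.exists_Fsym_eq_zero {W : S → X → Y → ℝ} (hW : Symmetrizable W) :
    ∃ σ : X → S → ℝ, IsChannel σ ∧ Fsym σ σ W = 0 := by
  obtain ⟨σ, hσ, hsym⟩ := hW
  exact ⟨σ, hσ, sum_eq_zero fun x₁ _ => sum_eq_zero fun x₂ _ => sum_eq_zero fun y _ => by
    rw [hsym, sub_self, abs_zero]⟩

end GapValues

theorem Fsym_min_stability_general {X Y S₁ : Type*}
    [Fintype X] [Fintype Y] [Fintype S₁] [Nonempty X] [Nonempty S₁]
    (W₁ : S₁ → X → Y → ℝ)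
    (δ : ℝ) (hδ : 0 < δ)
    (hmin : sInf {r : ℝ | ∃ σ σ' : X → S₁ → ℝ,
        IsChannel σ ∧ IsChannel σ' ∧ r = Fsym σ σ' W₁} = δ) :
    ∃ ε > 0, ∀ (S₂ : Type*) [Fintype S₂] [Nonempty S₂] (W₂ : S₂ → X → Y → ℝ),
      (∀ s, IsChannel (W₂ s)) → Davc W₁ W₂ < ε →
      δ / 2 ≤ sInf {r : ℝ | ∃ σ σ' : X → S₂ → ℝ,
          IsChannel σ ∧ IsChannel σ' ∧ r = Fsym σ σ' W₂} ∧
        ¬ Symmetrizable W₂ := by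
  classical
  have hX : (0 : ℝ) < Fintype.card X := by exact_mod_cast Fintype.card_pos
  refine ⟨δ / (4 * Fintype.card X ^ 2), by positivity, fun S₂ _ _ W₂ _ hD => ?_⟩
  choose f hf using exists_dChan_lt_of_Davc_lt hD
  have hgap : ∀ σ σ' : X → S₂ → ℝ, IsChannel σ → IsChannel σ' → δ / 2 ≤ Fsym σ σ' W₂ := by
    intro σ σ' hσ hσ'
    have hpush := le_Fsym_of_sInf_FsymValues_eq hmin (hσ.pushforward f) (hσ'.pushforward f)
    rw [Fsym_pushforward] at hpush
    have hperturb := Fsym_le_Fsym_add_of_dChan_le hσ hσ' (fun s₂ => (hf s₂).le)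
    have hε : 2 * (Fintype.card X : ℝ) ^ 2 * (δ / (4 * Fintype.card X ^ 2)) = δ / 2 := by
      field_simp; ring
    linarith
  refine ⟨le_sInf_FsymValues hgap, fun hsym => ?_⟩
  obtain ⟨σ, hσ, hzero⟩ := hsym.exists_Fsym_eq_zero
  linarith [hgap σ σ hσ hσ]

/-- if `min_{σ,σ'} F(σ,σ',W₁) = δ > 0`, then all AVCs in a sufficiently small
`D`-neighborhood of `W₁` have `min_{σ,σ'} F ≥ δ/2`, hence are non-symmetrizable. -/
theorem Fsym_min_stability {X Y S₁ : Type*}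
    [Fintype X] [Fintype Y] [Fintype S₁] [Nonempty X] [Nonempty S₁]
    (W₁ : S₁ → X → Y → ℝ) (hW₁ : ∀ s, IsChannel (W₁ s))
    (δ : ℝ) (hδ : 0 < δ)
    (hmin : sInf {r : ℝ | ∃ σ σ' : X → S₁ → ℝ,
        IsChannel σ ∧ IsChannel σ' ∧ r = Fsym σ σ' W₁} = δ) :
    ∃ ε > 0, ∀ (S₂ : Type*) [Fintype S₂] [Nonempty S₂] (W₂ : S₂ → X → Y → ℝ),
      (∀ s, IsChannel (W₂ s)) → Davc W₁ W₂ < ε →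
      δ / 2 ≤ sInf {r : ℝ | ∃ σ σ' : X → S₂ → ℝ,
          IsChannel σ ∧ IsChannel σ' ∧ r = Fsym σ σ' W₂} ∧
        ¬ Symmetrizable W₂ :=
  Fsym_min_stability_general W₁ δ hδ hmin
end
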